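/- arXiv:2112.03886 — 2 statements merged into one kernel-verified Lean document; each statement's English description precedes it below -/
import Mathlib

section
/- Let M and N be symmetric n×n matrices whose comparison matrices M̄ and N̄ are both positive semidefinite. Then the comparison matrix of M + N is positive semidefinite. -/
/-!
Test `x` against `|x|`: the triangle inequality gives `M̄ + N̄ ≤ (M + N)‾` entrywise, so
`0 ≤ |x|ᵀ (M̄ + N̄) |x| ≤ |x|ᵀ (M + N)‾ |x|`, and since `(M + N)‾` is a Z-matrix, replacing `x` by
`|x|` can only decrease its quadratic form.
-/

open Matrix

/-- The comparison matrix of a square matrix. -/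
def comparisonMatrix {n : Type*} [DecidableEq n] (M : Matrix n n ℝ) : Matrix n n ℝ :=
  fun i j => if i = j then M i i else -|M i j|

namespace Matrix

variable {n R : Type*} [Fintype n]

def IsZMatrix [LE R] [Zero R] (A : Matrix n n R) : Prop :=
  ∀ i j, i ≠ j → A i j ≤ 0

theorem IsZMatrix.dotProduct_mulVec_abs_le [CommRing R] [LinearOrder R] [IsStrictOrderedRing R]
    {A : Matrix n n R} (hA : A.IsZMatrix) (x : n → R) :
    |x| ⬝ᵥ (A *ᵥ |x|) ≤ x ⬝ᵥ (A *ᵥ x) := by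
  simp only [dotProduct, mulVec, Finset.mul_sum, Pi.abs_apply]
  refine Finset.sum_le_sum fun i _ => Finset.sum_le_sum fun j _ => ?_
  rcases eq_or_ne i j with rfl | hij
  · rw [mul_left_comm, abs_mul_abs_self, mul_left_comm]
  · calc |x i| * (A i j * |x j|) = A i j * |x i * x j| := by rw [abs_mul]; ring
      _ ≤ A i j * (x i * x j) := mul_le_mul_of_nonpos_left (le_abs_self _) (hA i j hij)
      _ = x i * (A i j * x j) := by ring

theorem dotProduct_mulVec_mono [Semiring R] [PartialOrder R] [IsOrderedRing R]
    {A B : Matrix n n R} (hAB : ∀ i j, A i j ≤ B i j) {v : n → R} (hv : 0 ≤ v) :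
    v ⬝ᵥ (A *ᵥ v) ≤ v ⬝ᵥ (B *ᵥ v) :=
  dotProduct_le_dotProduct_of_nonneg_left
    (fun i => dotProduct_le_dotProduct_of_nonneg_right (fun j => hAB i j) hv) hv

end Matrix

section ComparisonMatrix

variable {n : Type*} [DecidableEq n]

theorem isZMatrix_comparisonMatrix [Fintype n] (M : Matrix n n ℝ) :
    (comparisonMatrix M).IsZMatrix := fun i j hij => by
  simp [comparisonMatrix, hij]

theorem Matrix.IsSymm.comparisonMatrix {M : Matrix n n ℝ} (hM : M.IsSymm) :
    (comparisonMatrix M).IsSymm :=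
  IsSymm.ext fun i j => by
    rcases eq_or_ne i j with rfl | hij
    · rfl
    · simp only [_root_.comparisonMatrix, if_neg hij, if_neg hij.symm, hM.apply]

theorem add_comparisonMatrix_le_comparisonMatrix_add (M N : Matrix n n ℝ) (i j : n) :
    (comparisonMatrix M + comparisonMatrix N) i j ≤ comparisonMatrix (M + N) i j := by
  by_cases hij : i = j
  · simp [comparisonMatrix, hij]
  · simp only [comparisonMatrix, Matrix.add_apply, if_neg hij]
    linarith [abs_add_le (M i j) (N i j)]

end ComparisonMatrix

theorem comparison_add_posSemidef
    {n : ℕ} (M N : Matrix (Fin n) (Fin n) ℝ)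
    (hsymM : M.IsSymm) (hsymN : N.IsSymm)
    (hM : (comparisonMatrix M).PosSemidef) (hN : (comparisonMatrix N).PosSemidef) :
    (comparisonMatrix (M + N)).PosSemidef := by
  refine posSemidef_iff_dotProduct_mulVec.2
    ⟨isHermitian_iff_isSymm.2 (hsymM.add hsymN).comparisonMatrix, fun x => ?_⟩
  have hMx := hM.dotProduct_mulVec_nonneg |x|
  have hNx := hN.dotProduct_mulVec_nonneg |x|
  rw [star_trivial] at hMx hNx ⊢
  calc 0 ≤ |x| ⬝ᵥ (comparisonMatrix M *ᵥ |x|) + |x| ⬝ᵥ (comparisonMatrix N *ᵥ |x|) :=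
        add_nonneg hMx hNx
    _ = |x| ⬝ᵥ ((comparisonMatrix M + comparisonMatrix N) *ᵥ |x|) := by
        rw [add_mulVec, dotProduct_add]
    _ ≤ |x| ⬝ᵥ (comparisonMatrix (M + N) *ᵥ |x|) :=
        dotProduct_mulVec_mono (add_comparisonMatrix_le_comparisonMatrix_add M N) (abs_nonneg x)
    _ ≤ x ⬝ᵥ (comparisonMatrix (M + N) *ᵥ x) :=
        (isZMatrix_comparisonMatrix (M + N)).dotProduct_mulVec_abs_le x
end

section
/- Let A be an n×n symmetric irreducible matrix whose comparison matrix Ā is positive semidefinite. Then every proper principal submatrix of Ā (and hence of A) is positive definite. -/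
open Matrix

/-- A matrix is irreducible iff any two distinct indices are connected by a chain
of nonzero entries. -/
def MatrixIrreducible {n : Type*} (A : Matrix n n ℝ) : Prop :=
  ∀ i j : n, i ≠ j → Relation.TransGen (fun a b => A a b ≠ 0) i j

/-!
For `x ≠ 0` indexed by `α`, both `x ⬝ A_αα x` and `x ⬝ Ā_αα x` are bounded below by
`|x| ⬝ Ā_αα |x|`, which equals `y ⬝ Ā y` for the extension `y ≥ 0` of `|x|` by zero.
This is nonnegative as `Ā` is positive semidefinite; if it vanished, `y` would lie in the kernel
of `Ā`. The zeros of a nonnegative kernel vector of `Ā` propagate along nonzero entries of `A`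
(the off-diagonal entries of `Ā` are nonpositive), so by irreducibility a zero of `y` outside
the submatrix forces `y = 0`, hence `x = 0`.
-/

open Function

section Extend

variable {R m n : Type*} [CommSemiring R] [Fintype m] [Fintype n]

theorem dotProduct_mulVec_extend_zero {e : m → n} (he : Injective e) (M : Matrix n n R)
    (z : m → R) :
    extend e z 0 ⬝ᵥ (M *ᵥ extend e z 0) = z ⬝ᵥ (M.submatrix e e *ᵥ z) := by
  have sum_extend (f : n → R → R) (hf : ∀ i, f i 0 = 0) :
      ∑ i, f i (extend e z 0 i) = ∑ a, f (e a) (z a) := by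
    refine (Fintype.sum_of_injective e he _ _ (fun i hi ↦ ?_) fun a ↦ by rw [he.extend_apply]).symm
    rw [extend_apply' _ _ _ (by simpa using hi), Pi.zero_apply, hf]
  simp only [dotProduct, mulVec, submatrix_apply]
  rw [sum_extend (fun i t ↦ t * ∑ j, M i j * extend e z 0 j) fun _ ↦ zero_mul _]
  refine Finset.sum_congr rfl fun a _ ↦ ?_
  rw [sum_extend (fun j t ↦ M (e a) j * t) fun _ ↦ mul_zero _]

end Extend

section Comparison

variable {m n : Type*} [DecidableEq n]

theorem comparisonMatrix_comparisonMatrix (M : Matrix n n ℝ) :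
    comparisonMatrix (comparisonMatrix M) = comparisonMatrix M := by
  ext i j
  by_cases h : i = j <;> simp [comparisonMatrix, h]

theorem comparisonMatrix_submatrix [DecidableEq m] {e : m → n} (he : Injective e) (M : Matrix n n ℝ) :
    comparisonMatrix (M.submatrix e e) = (comparisonMatrix M).submatrix e e := by
  ext i j
  simp [comparisonMatrix, he.eq_iff]

variable [Fintype n]

theorem abs_dotProduct_comparisonMatrix_mulVec_abs_le (M : Matrix n n ℝ) (x : n → ℝ) :
    |x| ⬝ᵥ (comparisonMatrix M *ᵥ |x|) ≤ x ⬝ᵥ (M *ᵥ x) := by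
  simp only [dotProduct, mulVec, Finset.mul_sum]
  refine Finset.sum_le_sum fun i _ ↦ Finset.sum_le_sum fun j _ ↦ ?_
  by_cases h : i = j
  · subst h
    simp only [comparisonMatrix, if_true, Pi.abs_apply]
    exact le_of_eq (by linear_combination M i i * abs_mul_abs_self (x i))
  · simp only [comparisonMatrix, h, if_false, Pi.abs_apply]
    have := neg_abs_le (x i * (M i j * x j))
    rw [abs_mul, abs_mul] at this
    linarith

theorem posDef_of_dotProduct_comparisonMatrix_mulVec_abs_pos {M : Matrix n n ℝ}
    (hM : M.IsHermitian) (hpos : ∀ x ≠ 0, 0 < |x| ⬝ᵥ (comparisonMatrix M *ᵥ |x|)) :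
    M.PosDef :=
  .of_dotProduct_mulVec_pos hM fun x hx ↦
    (hpos x hx).trans_le (abs_dotProduct_comparisonMatrix_mulVec_abs_le M x)

theorem apply_eq_zero_of_comparisonMatrix_mulVec_eq_zero {M : Matrix n n ℝ} {y : n → ℝ} (hy : 0 ≤ y)
    (hker : comparisonMatrix M *ᵥ y = 0) {k l : n} (hk : y k = 0) (hkl : M k l ≠ 0) :
    y l = 0 := by
  have hnonpos : ∀ j ∈ Finset.univ, comparisonMatrix M k j * y j ≤ 0 := fun j _ ↦ by
    by_cases h : k = j
    · simp [← h, hk]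
    · simpa [comparisonMatrix, h] using mul_nonneg (abs_nonneg (M k j)) (hy j)
  have hterm := (Finset.sum_eq_zero_iff_of_nonpos hnonpos).mp (congrFun hker k) l
    (Finset.mem_univ l)
  by_cases h : k = l
  · rwa [← h]
  · simpa [comparisonMatrix, h, hkl] using hterm

theorem MatrixIrreducible.eq_zero_of_comparisonMatrix_mulVec_eq_zero {M : Matrix n n ℝ}
    (hM : MatrixIrreducible M) {y : n → ℝ} (hy : 0 ≤ y) (hker : comparisonMatrix M *ᵥ y = 0)
    {k : n} (hk : y k = 0) : y = 0 := by
  have reach : ∀ l, Relation.TransGen (fun a b ↦ M a b ≠ 0) k l → y l = 0 := fun l hkl ↦ by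
    induction hkl with
    | single hkl => exact apply_eq_zero_of_comparisonMatrix_mulVec_eq_zero hy hker hk hkl
    | tail _ hl ih => exact apply_eq_zero_of_comparisonMatrix_mulVec_eq_zero hy hker ih hl
  funext l
  by_cases h : k = l
  · rwa [← h]
  · exact reach l (hM k l h)

theorem MatrixIrreducible.dotProduct_comparisonMatrix_submatrix_mulVec_abs_pos [Fintype m]
    {M : Matrix n n ℝ} (hM : MatrixIrreducible M) (hcmp : (comparisonMatrix M).PosSemidef)
    {e : m → n} (he : Injective e) {k : n} (hk : k ∉ Set.range e) {x : m → ℝ} (hx : x ≠ 0) :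
    0 < |x| ⬝ᵥ ((comparisonMatrix M).submatrix e e *ᵥ |x|) := by
  set y := extend e |x| 0
  have hq := dotProduct_mulVec_extend_zero he (comparisonMatrix M) |x|
  have hnonneg : 0 ≤ y ⬝ᵥ (comparisonMatrix M *ᵥ y) := by
    simpa using hcmp.dotProduct_mulVec_nonneg y
  refine hq ▸ hnonneg.lt_of_ne fun hzero ↦ hx ?_
  have hker : comparisonMatrix M *ᵥ y = 0 :=
    (hcmp.dotProduct_mulVec_zero_iff y).mp (by simpa using hzero.symm)
  have hy : y = 0 := hM.eq_zero_of_comparisonMatrix_mulVec_eq_zero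
    (extend_nonneg (abs_nonneg x) le_rfl) hker (extend_apply' _ _ _ (by simpa using hk))
  funext a
  simpa [y, he.extend_apply] using congrFun hy (e a)

end Comparison

theorem proper_principal_submatrices_posDef
    {n : ℕ} (A : Matrix (Fin n) (Fin n) ℝ) (hsym : A.IsSymm)
    (hirr : MatrixIrreducible A)
    (hcmp : (comparisonMatrix A).PosSemidef)
    (α : Finset (Fin n)) (hα : α ≠ Finset.univ) :
    ((comparisonMatrix A).submatrix (Subtype.val : {x // x ∈ α} → Fin n)
        (Subtype.val : {x // x ∈ α} → Fin n)).PosDef ∧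
      (A.submatrix (Subtype.val : {x // x ∈ α} → Fin n)
        (Subtype.val : {x // x ∈ α} → Fin n)).PosDef := by
  obtain ⟨k, hk⟩ : ∃ k, k ∉ α := by simpa [Finset.eq_univ_iff_forall] using hα
  have hpos := fun x (hx : x ≠ 0) ↦ hirr.dotProduct_comparisonMatrix_submatrix_mulVec_abs_pos hcmp
    Subtype.val_injective (k := k) (by simpa using hk) hx
  rw [← comparisonMatrix_submatrix Subtype.val_injective] at hpos ⊢
  have hA : (A.submatrix Subtype.val Subtype.val : Matrix α α ℝ).IsHermitian :=
    (hsym.submatrix _).trans (conjTranspose_eq_transpose_of_trivial _)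
  refine ⟨posDef_of_dotProduct_comparisonMatrix_mulVec_abs_pos ?_ ?_,
    posDef_of_dotProduct_comparisonMatrix_mulVec_abs_pos hA hpos⟩
  · rw [comparisonMatrix_submatrix Subtype.val_injective]
    exact hcmp.isHermitian.submatrix _
  · simpa only [comparisonMatrix_comparisonMatrix] using hpos
end
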